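/- For any elementary existential doctrine P : C^op → InfSL, the data of Definition 'exact completion of P' form a category T_P: composition of arrows φ : ⟨A,ρ⟩ → ⟨B,σ⟩ and ψ : ⟨B,σ⟩ → ⟨C,τ⟩ given by ∃_{p2}(P_{⟨p1,p2⟩}(φ) ∧ P_{⟨p2,p3⟩}(ψ)) is a well-defined arrow ⟨A,ρ⟩ → ⟨C,τ⟩, is associative, and ρ itself is the identity arrow on ⟨A,ρ⟩. -/

import Mathlib

open CategoryTheory CategoryTheory.Limits

universe u v w

/-- Layer 0: an indexed family of inf-semilattices over a category. -/
structure DocL0 (C : Type u) [Category.{v} C] where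
  obj : C → Type w
  semi : ∀ A : C, SemilatticeInf (obj A)

attribute [instance] DocL0.semi

/-- Layer 1: fibrewise top elements. -/
structure DocL1 (C : Type u) [Category.{v} C] extends DocL0.{u, v, w} C where
  otop : ∀ A : C, OrderTop (obj A)

attribute [instance] DocL1.otop

/-- A doctrine: an indexed inf-semilattice `P : Cᵒᵖ → InfSL`. -/
structure Doctrine (C : Type u) [Category.{v} C] extends DocL1.{u, v, w} C where
  map : ∀ {A B : C}, (A ⟶ B) → obj B → obj A
  map_id : ∀ (A : C) (x : obj A), map (𝟙 A) x = x
  map_comp : ∀ {A B D : C} (f : A ⟶ B) (g : B ⟶ D) (x : obj D),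
    map (f ≫ g) x = map f (map g x)
  map_mono : ∀ {A B : C} (f : A ⟶ B), Monotone (map f)
  map_inf : ∀ {A B : C} (f : A ⟶ B) (x y : obj B),
    map f (x ⊓ y) = map f x ⊓ map f y
  map_top : ∀ {A B : C} (f : A ⟶ B), map f (⊤ : obj B) = (⊤ : obj A)

/-- An elementary existential doctrine. -/
structure EED (C : Type u) [Category.{v} C] [HasBinaryProducts C] extends
    Doctrine.{u, v, w} C where
  delta : ∀ A : C, obj (A ⨯ A)
  elem_i : ∀ {A : C} (α : obj A) (β : obj (A ⨯ A)),
    map prod.fst α ⊓ delta A ≤ β ↔ α ≤ map (diag A) β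
  elem_ii : ∀ {X A : C} (α : obj (X ⨯ A)) (β : obj ((X ⨯ A) ⨯ A)),
    map prod.fst α ⊓ map (prod.lift (prod.fst ≫ prod.snd) prod.snd) (delta A) ≤ β ↔
      α ≤ map (prod.lift (𝟙 (X ⨯ A)) prod.snd) β
  ex : ∀ {A B : C}, (A ⟶ B) → obj A → obj B
  ex_adj : ∀ {A B : C} (f : A ⟶ B) (α : obj A) (β : obj B),
    ex f α ≤ β ↔ α ≤ map f β
  frobenius : ∀ {A B : C} (f : A ⟶ B) (α : obj B) (β : obj A),
    ex f (map f α ⊓ β) = α ⊓ ex f β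
  beck_chevalley : ∀ {A A' B : C} (f : A' ⟶ A) (β : obj (A ⨯ B)),
    ex prod.fst (map (prod.map f (𝟙 B)) β) = map f (ex prod.fst β)

namespace EED

variable {C : Type u} [Category.{v} C] [HasBinaryProducts C] (P : EED.{u, v, w} C)

/-- Relational composition `∃_{p₂}(P_{⟨p₁,p₂⟩}(θ) ∧ P_{⟨p₂,p₃⟩}(ζ))`. -/
noncomputable def comp {A B D : C} (θ : P.obj (A ⨯ B)) (ζ : P.obj (B ⨯ D)) : P.obj (A ⨯ D) :=
  P.ex (prod.lift (prod.fst ≫ prod.fst) prod.snd)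
    (P.map prod.fst θ ⊓ P.map (prod.lift (prod.fst ≫ prod.snd) prod.snd) ζ)

/-- Opposite relation `P_{⟨p₂,p₁⟩}(θ)`. -/
noncomputable def op {A B : C} (θ : P.obj (A ⨯ B)) : P.obj (B ⨯ A) :=
  P.map (prod.lift prod.snd prod.fst) θ

/-- `ρ ≤ P_{⟨p₂,p₁⟩}(ρ)`. -/
def SymmRel {A : C} (ρ : P.obj (A ⨯ A)) : Prop :=
  ρ ≤ P.map (prod.lift prod.snd prod.fst) ρ

/-- `P_{⟨p₁,p₂⟩}(ρ) ∧ P_{⟨p₂,p₃⟩}(ρ) ≤ P_{⟨p₁,p₃⟩}(ρ)` in `P((A×A)×A)`. -/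
def TransRel {A : C} (ρ : P.obj (A ⨯ A)) : Prop :=
  P.map prod.fst ρ ⊓ P.map (prod.lift (prod.fst ≫ prod.snd) prod.snd) ρ ≤
    P.map (prod.lift (prod.fst ≫ prod.fst) prod.snd) ρ

/-- `δ_A ≤ ρ`. -/
def ReflRel {A : C} (ρ : P.obj (A ⨯ A)) : Prop := P.delta A ≤ ρ

/-- A `P`-equivalence relation. -/
def EqRel {A : C} (ρ : P.obj (A ⨯ A)) : Prop :=
  P.ReflRel ρ ∧ P.SymmRel ρ ∧ P.TransRel ρ

/-- Conditions (i)–(v) for an arrow `φ : ⟨A,ρ⟩ → ⟨B,σ⟩` of the exact completion `T_P`. -/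
def IsArrow {A B : C} (ρ : P.obj (A ⨯ A)) (σ : P.obj (B ⨯ B)) (φ : P.obj (A ⨯ B)) : Prop :=
  (φ ≤ P.map (prod.lift prod.fst prod.fst) ρ ⊓ P.map (prod.lift prod.snd prod.snd) σ) ∧
  (P.map prod.fst ρ ⊓ P.map (prod.lift (prod.fst ≫ prod.snd) prod.snd) φ ≤
      P.map (prod.lift (prod.fst ≫ prod.fst) prod.snd) φ) ∧
  (P.map prod.fst φ ⊓ P.map (prod.lift (prod.fst ≫ prod.snd) prod.snd) σ ≤
      P.map (prod.lift (prod.fst ≫ prod.fst) prod.snd) φ) ∧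
  (P.map prod.fst φ ⊓ P.map (prod.lift (prod.fst ≫ prod.fst) prod.snd) φ ≤
      P.map (prod.lift (prod.fst ≫ prod.snd) prod.snd) σ) ∧
  (P.map (diag A) ρ ≤ P.ex prod.fst φ)

/-- The graph relation `L[f] = ∃_{p₂}(P_{⟨p₁,p₂⟩}(ρ) ∧ P_{⟨f∘p₂,p₃⟩}(σ))` in `P(A×B)`. -/
noncomputable def Lrel {A B : C} (f : A ⟶ B) (ρ : P.obj (A ⨯ A)) (σ : P.obj (B ⨯ B)) : P.obj (A ⨯ B) :=
  P.ex (prod.lift (prod.fst ≫ prod.fst) prod.snd)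
    (P.map prod.fst ρ ⊓ P.map (prod.lift (prod.fst ≫ prod.snd ≫ f) prod.snd) σ)

end EED

/-!
Write `θζ` for `P.comp θ ζ` (first `θ`, then `ζ`) and `θ°` for `P.op θ`. This composition of
`P`-relations is monotone and associative (Beck–Chevalley and Frobenius move the existential
quantifiers to the front, after which both sides are the same relation up to a swap of variables),
and `(θζ)° = ζ°θ°`. Conditions (ii)–(iv) on an arrow `φ : ⟨A,ρ⟩ → ⟨B,σ⟩` read `ρφ ≤ φ`, `φσ ≤ φ`
and `φ°φ ≤ σ`, so they pass to composites by associativity and monotonicity alone, e.g.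
`(φψ)°(φψ) = ψ°(φ°φ)ψ ≤ ψ°σψ ≤ ψ°ψ ≤ τ`.
-/

namespace EED

variable {C : Type u} [Category.{v} C] [HasBinaryProducts C] (P : EED.{u, v, w} C)

theorem map_map {A B D : C} (f : A ⟶ B) (g : B ⟶ D) (x : P.obj D) :
    P.map f (P.map g x) = P.map (f ≫ g) x :=
  (P.map_comp f g x).symm

theorem le_map_ex {A B : C} (f : A ⟶ B) (x : P.obj A) : x ≤ P.map f (P.ex f x) :=
  (P.ex_adj f x _).1 le_rfl

theorem ex_mono {A B : C} (f : A ⟶ B) : Monotone (P.ex f) := fun x y h =>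
  (P.ex_adj f x _).2 (h.trans (P.le_map_ex f y))

theorem ex_comp {A B D : C} (f : A ⟶ B) (g : B ⟶ D) (x : P.obj A) :
    P.ex (f ≫ g) x = P.ex g (P.ex f x) := by
  apply le_antisymm
  · rw [P.ex_adj, P.map_comp]
    exact (P.le_map_ex f x).trans (P.map_mono f (P.le_map_ex g _))
  · rw [P.ex_adj, P.ex_adj, ← P.map_comp]
    exact P.le_map_ex (f ≫ g) x

theorem ex_eq_map_of_inverse {A B : C} (f : A ⟶ B) (g : B ⟶ A) (hfg : f ≫ g = 𝟙 A)
    (hgf : g ≫ f = 𝟙 B) (x : P.obj A) : P.ex f x = P.map g x := by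
  apply le_antisymm
  · rw [P.ex_adj, P.map_map, hfg, P.map_id]
  · simpa only [P.map_map, hgf, P.map_id] using P.map_mono g (P.le_map_ex f x)

theorem map_ex_fst {A A' B : C} (f : A' ⟶ A) (β : P.obj (A ⨯ B)) :
    P.map f (P.ex prod.fst β) = P.ex prod.fst (P.map (prod.map f (𝟙 B)) β) :=
  (P.beck_chevalley f β).symm

theorem ex_inf_map {A B : C} (f : A ⟶ B) (α : P.obj B) (β : P.obj A) :
    P.ex f (β ⊓ P.map f α) = P.ex f β ⊓ α := by
  rw [inf_comm β, P.frobenius, inf_comm]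

theorem prod_lift_comp_fst_comp_snd {W X Y : C} (f : W ⟶ X ⨯ Y) :
    prod.lift (f ≫ prod.fst) (f ≫ prod.snd) = f :=
  prod.hom_ext (prod.lift_fst _ _) (prod.lift_snd _ _)

attribute [local simp] prod_lift_comp_fst_comp_snd map_map Doctrine.map_id Doctrine.map_inf
  prod.lift_fst prod.lift_snd prod.lift_fst_assoc prod.lift_snd_assoc

noncomputable def swapRight (X Y Z : C) : (X ⨯ Y) ⨯ Z ⟶ (X ⨯ Z) ⨯ Y :=
  prod.lift (prod.lift (prod.fst ≫ prod.fst) prod.snd) (prod.fst ≫ prod.snd)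

theorem swapRight_swapRight (X Y Z : C) : swapRight X Y Z ≫ swapRight X Z Y = 𝟙 _ := by
  ext <;> simp [swapRight]

theorem ex_swapRight {X Y Z : C} (x : P.obj ((X ⨯ Y) ⨯ Z)) :
    P.ex (swapRight X Y Z) x = P.map (swapRight X Z Y) x :=
  P.ex_eq_map_of_inverse _ _ (swapRight_swapRight X Y Z) (swapRight_swapRight X Z Y) x

section Relations

variable {A B D E : C}

theorem comp_le_iff (θ : P.obj (A ⨯ B)) (ζ : P.obj (B ⨯ D)) (χ : P.obj (A ⨯ D)) :
    P.comp θ ζ ≤ χ ↔ P.map prod.fst θ ⊓ P.map (prod.lift (prod.fst ≫ prod.snd) prod.snd) ζ ≤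
      P.map (prod.lift (prod.fst ≫ prod.fst) prod.snd) χ :=
  P.ex_adj _ _ _

theorem comp_mono {θ θ' : P.obj (A ⨯ B)} {ζ ζ' : P.obj (B ⨯ D)} (hθ : θ ≤ θ') (hζ : ζ ≤ ζ') :
    P.comp θ ζ ≤ P.comp θ' ζ' :=
  P.ex_mono _ (inf_le_inf (P.map_mono _ hθ) (P.map_mono _ hζ))

theorem map_inf_map_le_map_comp {X : C} (a : X ⟶ A) (b : X ⟶ B) (d : X ⟶ D)
    (θ : P.obj (A ⨯ B)) (ζ : P.obj (B ⨯ D)) :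
    P.map (prod.lift a b) θ ⊓ P.map (prod.lift b d) ζ ≤ P.map (prod.lift a d) (P.comp θ ζ) := by
  simpa [comp] using P.map_mono (prod.lift (prod.lift a b) d)
    (P.le_map_ex (prod.lift (prod.fst ≫ prod.fst) prod.snd)
      (P.map prod.fst θ ⊓ P.map (prod.lift (prod.fst ≫ prod.snd) prod.snd) ζ))

theorem comp_le_map_fst_of_le {θ : P.obj (A ⨯ B)} {α : P.obj A}
    (h : θ ≤ P.map (prod.fst : A ⨯ B ⟶ A) α) (ζ : P.obj (B ⨯ D)) :
    P.comp θ ζ ≤ P.map prod.fst α := by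
  rw [comp_le_iff]
  simpa using inf_le_left.trans (P.map_mono (prod.fst : (A ⨯ B) ⨯ D ⟶ A ⨯ B) h)

theorem comp_le_map_snd_of_le {ζ : P.obj (B ⨯ D)} {α : P.obj D}
    (h : ζ ≤ P.map (prod.snd : B ⨯ D ⟶ D) α) (θ : P.obj (A ⨯ B)) :
    P.comp θ ζ ≤ P.map prod.snd α := by
  rw [comp_le_iff]
  simpa using inf_le_right.trans
    (P.map_mono (prod.lift (prod.fst ≫ prod.snd) prod.snd : (A ⨯ B) ⨯ D ⟶ B ⨯ D) h)

theorem comp_eq_ex_fst (θ : P.obj (A ⨯ B)) (ζ : P.obj (B ⨯ D)) :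
    P.comp θ ζ = P.ex prod.fst
      (P.map (prod.lift (prod.fst ≫ prod.fst) prod.snd) θ ⊓
        P.map (prod.lift prod.snd (prod.fst ≫ prod.snd)) ζ) := by
  have hp : prod.lift (prod.fst ≫ prod.fst) prod.snd = swapRight A B D ≫ prod.fst := by
    simp [swapRight]
  rw [comp, hp, P.ex_comp, ex_swapRight]
  simp [swapRight]

theorem ex_fst_comp (θ : P.obj (A ⨯ B)) (ζ : P.obj (B ⨯ D)) :
    P.ex prod.fst (P.comp θ ζ) = P.ex prod.fst (θ ⊓ P.map prod.snd (P.ex prod.fst ζ)) := by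
  have hfst : prod.lift (prod.fst ≫ prod.fst) prod.snd ≫ prod.fst =
      (prod.fst ≫ prod.fst : (A ⨯ B) ⨯ D ⟶ A) := by simp
  have hsnd : (prod.lift (prod.fst ≫ prod.snd) prod.snd : (A ⨯ B) ⨯ D ⟶ B ⨯ D) =
      prod.map prod.snd (𝟙 D) := by
    ext <;> simp
  rw [comp, ← P.ex_comp, hfst, P.ex_comp, hsnd, P.frobenius, P.beck_chevalley]

theorem op_comp (θ : P.obj (A ⨯ B)) (ζ : P.obj (B ⨯ D)) :
    P.op (P.comp θ ζ) = P.comp (P.op ζ) (P.op θ) := by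
  rw [op, comp_eq_ex_fst, comp_eq_ex_fst, map_ex_fst, inf_comm]
  simp [op]

theorem comp_assoc (φ : P.obj (A ⨯ B)) (ψ : P.obj (B ⨯ D)) (χ : P.obj (D ⨯ E)) :
    P.comp (P.comp φ ψ) χ = P.comp φ (P.comp ψ χ) := by
  have hp : (prod.fst ≫ prod.fst : ((A ⨯ E) ⨯ D) ⨯ B ⟶ A ⨯ E) =
      swapRight (A ⨯ E) D B ≫ prod.fst ≫ prod.fst := by
    simp [swapRight]
  rw [P.comp_eq_ex_fst (P.comp φ ψ), P.comp_eq_ex_fst φ ψ, P.comp_eq_ex_fst φ (P.comp ψ χ),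
    P.comp_eq_ex_fst ψ χ, map_ex_fst, map_ex_fst,
    ← ex_inf_map, ← P.frobenius, ← P.ex_comp, ← P.ex_comp, hp, P.ex_comp, ex_swapRight]
  simp [swapRight, inf_assoc]

theorem op_le_self_of_symmRel {ρ : P.obj (A ⨯ A)} (hs : P.SymmRel ρ) : P.op ρ ≤ ρ := by
  simpa [op] using P.map_mono (prod.lift prod.snd prod.fst) hs

end Relations

section Arrows

variable {A B D : C}

theorem comp_op_self_le_iff (φ : P.obj (A ⨯ B)) (σ : P.obj (B ⨯ B)) :
    P.comp (P.op φ) φ ≤ σ ↔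
      P.map prod.fst φ ⊓ P.map (prod.lift (prod.fst ≫ prod.fst) prod.snd) φ ≤
        P.map (prod.lift (prod.fst ≫ prod.snd) prod.snd) σ := by
  rw [comp_eq_ex_fst, P.ex_adj]
  constructor
  · intro h
    simpa [op] using P.map_mono
      (prod.lift (prod.lift (prod.fst ≫ prod.snd) prod.snd) (prod.fst ≫ prod.fst)) h
  · intro h
    simpa [op] using P.map_mono
      (prod.lift (prod.lift prod.snd (prod.fst ≫ prod.fst)) (prod.fst ≫ prod.snd)) h

theorem isArrow_iff (ρ : P.obj (A ⨯ A)) (σ : P.obj (B ⨯ B)) (φ : P.obj (A ⨯ B)) :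
    P.IsArrow ρ σ φ ↔
      φ ≤ P.map prod.fst (P.map (diag A) ρ) ⊓ P.map prod.snd (P.map (diag B) σ) ∧
      P.comp ρ φ ≤ φ ∧ P.comp φ σ ≤ φ ∧ P.comp (P.op φ) φ ≤ σ ∧
      P.map (diag A) ρ ≤ P.ex prod.fst φ := by
  rw [comp_op_self_le_iff, comp_le_iff, comp_le_iff]
  simp only [IsArrow, map_map, prod.comp_diag]

theorem isArrow_comp {ρ : P.obj (A ⨯ A)} {σ : P.obj (B ⨯ B)} {τ : P.obj (D ⨯ D)}
    {φ : P.obj (A ⨯ B)} {ψ : P.obj (B ⨯ D)} (hφ : P.IsArrow ρ σ φ) (hψ : P.IsArrow σ τ ψ) :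
    P.IsArrow ρ τ (P.comp φ ψ) := by
  rw [isArrow_iff] at hφ hψ ⊢
  obtain ⟨hφ_field, hφ_left, hφ_right, hφ_func, hφ_total⟩ := hφ
  obtain ⟨hψ_field, hψ_left, hψ_right, hψ_func, hψ_total⟩ := hψ
  refine ⟨le_inf (P.comp_le_map_fst_of_le (hφ_field.trans inf_le_left) ψ)
    (P.comp_le_map_snd_of_le (hψ_field.trans inf_le_right) φ), ?_, ?_, ?_, ?_⟩
  · calc P.comp ρ (P.comp φ ψ) = P.comp (P.comp ρ φ) ψ := (P.comp_assoc ρ φ ψ).symm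
      _ ≤ P.comp φ ψ := P.comp_mono hφ_left le_rfl
  · calc P.comp (P.comp φ ψ) τ = P.comp φ (P.comp ψ τ) := P.comp_assoc φ ψ τ
      _ ≤ P.comp φ ψ := P.comp_mono le_rfl hψ_right
  · calc P.comp (P.op (P.comp φ ψ)) (P.comp φ ψ)
          = P.comp (P.op ψ) (P.comp (P.comp (P.op φ) φ) ψ) := by
            rw [op_comp, comp_assoc, comp_assoc]
      _ ≤ P.comp (P.op ψ) (P.comp σ ψ) := P.comp_mono le_rfl (P.comp_mono hφ_func le_rfl)
      _ ≤ P.comp (P.op ψ) ψ := P.comp_mono le_rfl hψ_left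
      _ ≤ τ := hψ_func
  · have hφψ : φ ≤ φ ⊓ P.map prod.snd (P.ex prod.fst ψ) :=
      le_inf le_rfl ((hφ_field.trans inf_le_right).trans (P.map_mono _ hψ_total))
    calc P.map (diag A) ρ ≤ P.ex prod.fst φ := hφ_total
      _ ≤ P.ex prod.fst (φ ⊓ P.map prod.snd (P.ex prod.fst ψ)) := P.ex_mono _ hφψ
      _ = P.ex prod.fst (P.comp φ ψ) := (P.ex_fst_comp φ ψ).symm

theorem isArrow_self {ρ : P.obj (A ⨯ A)} (hs : P.SymmRel ρ) (ht : P.TransRel ρ) :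
    P.IsArrow ρ ρ ρ := by
  have htrans : P.comp ρ ρ ≤ ρ := (P.comp_le_iff ρ ρ ρ).2 ht
  have hfst : ρ ≤ P.map prod.fst (P.map (diag A) ρ) := by
    have h := P.map_inf_map_le_map_comp prod.fst prod.snd prod.fst ρ ρ
    simp only [prod.lift_fst_snd, P.map_id] at h
    simpa using (le_inf le_rfl hs).trans (h.trans (P.map_mono _ htrans))
  have hsnd : ρ ≤ P.map prod.snd (P.map (diag A) ρ) := by
    have h := P.map_inf_map_le_map_comp prod.snd prod.fst prod.snd ρ ρ
    simp only [prod.lift_fst_snd, P.map_id] at h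
    simpa using (le_inf hs le_rfl).trans (h.trans (P.map_mono _ htrans))
  rw [isArrow_iff]
  exact ⟨le_inf hfst hsnd, htrans, htrans,
    (P.comp_mono (P.op_le_self_of_symmRel hs) le_rfl).trans htrans,
    by simpa using P.map_mono (diag A) (P.le_map_ex prod.fst ρ)⟩

end Arrows

end EED

theorem exact_completion_is_category_general
    {C : Type u} [Category.{v} C] [HasBinaryProducts C] (P : EED.{u, v, w} C)
    {A B D E : C}
    (ρ : P.obj (A ⨯ A)) (σ : P.obj (B ⨯ B)) (τ : P.obj (D ⨯ D))
    (hρ : P.SymmRel ρ ∧ P.TransRel ρ)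
    (φ : P.obj (A ⨯ B)) (ψ : P.obj (B ⨯ D)) (χ : P.obj (D ⨯ E))
    (hφ : P.IsArrow ρ σ φ) (hψ : P.IsArrow σ τ ψ) :
    P.IsArrow ρ τ (P.comp φ ψ) ∧
    P.comp (P.comp φ ψ) χ = P.comp φ (P.comp ψ χ) ∧
    P.IsArrow ρ ρ ρ :=
  ⟨P.isArrow_comp hφ hψ, P.comp_assoc φ ψ χ, P.isArrow_self hρ.1 hρ.2⟩

/-- the data of the exact completion `T_P` form a category:
composition of arrows is a well-defined arrow, composition is associative, and
`ρ` itself satisfies the arrow conditions for the identity on `⟨A,ρ⟩`. -/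
theorem exact_completion_is_category
    {C : Type u} [Category.{v} C] [HasBinaryProducts C] (P : EED.{u, v, w} C)
    {A B D E : C}
    (ρ : P.obj (A ⨯ A)) (σ : P.obj (B ⨯ B)) (τ : P.obj (D ⨯ D)) (υ : P.obj (E ⨯ E))
    (hρ : P.SymmRel ρ ∧ P.TransRel ρ) (hσ : P.SymmRel σ ∧ P.TransRel σ)
    (hτ : P.SymmRel τ ∧ P.TransRel τ) (hυ : P.SymmRel υ ∧ P.TransRel υ)
    (φ : P.obj (A ⨯ B)) (ψ : P.obj (B ⨯ D)) (χ : P.obj (D ⨯ E))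
    (hφ : P.IsArrow ρ σ φ) (hψ : P.IsArrow σ τ ψ) (hχ : P.IsArrow τ υ χ) :
    P.IsArrow ρ τ (P.comp φ ψ) ∧
    P.comp (P.comp φ ψ) χ = P.comp φ (P.comp ψ χ) ∧
    P.IsArrow ρ ρ ρ :=
  exact_completion_is_category_general P ρ σ τ hρ φ ψ χ hφ hψ
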